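/- Let X₁ and X₂ be finite sets and X = X₁ ∪ X₂. Let z, z' ∈ Z(X) satisfy π_{X→X₁}(z) = π_{X→X₁}(z') and π_{X→X₂}(z) = π_{X→X₂}(z'). Then there exist vectors z = z₀, z₁, …, z_ℓ = z' in Z(X) such that for every k ∈ {1,…,ℓ}, ‖z_k - z_{k-1}‖₁ = 4, π_{X→X₁}(z_{k-1}) = π_{X→X₁}(z_k), and π_{X→X₂}(z_{k-1}) = π_{X→X₂}(z_k). Moreover, if z and z' are non-negative (all coordinates ≥ 0), the intermediate vectors z₀,…,z_ℓ can be chosen non-negative. -/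

import Mathlib

/-!
The difference `d = z - z'` has zero `X₁`- and `X₂`-marginals. If `d ≠ 0`, pick `a` with
`d a > 0`; its `X₁`-fibre contains some `b` with `d b < 0`, whose `X₂`-fibre contains some `c` with
`d c > 0`. Since `a`, `b`, `c` agree on `X₁ ∩ X₂`, gluing `c` on `X₁` with `a` on `X₂` gives a
fourth labeling `w`. Adding `e_b + e_w - e_a - e_c` to `z` preserves both marginals, has `ℓ₁`-norm
`4`, keeps `z` non-negative when `z'` is (as `z a > z' a ≥ 0` and `z c > z' c ≥ 0`), and lowers
`‖z - z'‖₁` by at least `2`; iterating reaches `z'`.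
-/

open Finset

/-- `ZL S` is the integral lattice with basis indexed by binary labelings of the
finite set `S`. -/
abbrev ZL {V : Type} (S : Finset V) : Type := ({x // x ∈ S} → Bool) → ℤ

/-- The projection `π_{S → T}` for `T ⊆ S`: the linear extension of `e_a ↦ e_{a|_T}`. -/
noncomputable def projZ {V : Type} [Fintype V] [DecidableEq V] {S T : Finset V}
    (h : T ⊆ S) (z : ZL S) : ZL T := fun b =>
  ∑ a : {x // x ∈ S} → Bool,
    if ∀ x : {x // x ∈ T}, a ⟨x.1, h x.2⟩ = b x then z a else 0

/-- The ℓ₁-norm on `ZL S` with respect to the standard basis. -/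
noncomputable def l1Z {V : Type} [Fintype V] [DecidableEq V] {S : Finset V}
    (z : ZL S) : ℤ := ∑ a, |z a|

theorem Relation.ReflTransGen.exists_fin_path {α : Type*} {r : α → α → Prop} {a b : α}
    (h : Relation.ReflTransGen r a b) :
    ∃ (ℓ : ℕ) (f : Fin (ℓ + 1) → α), f 0 = a ∧ f (Fin.last ℓ) = b ∧
      ∀ k : Fin ℓ, r (f k.castSucc) (f k.succ) := by
  induction h using Relation.ReflTransGen.head_induction_on with
  | refl => exact ⟨0, fun _ => b, rfl, rfl, Fin.elim0⟩
  | head hac _ ih =>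
    obtain ⟨ℓ, f, hf0, hfl, hf⟩ := ih
    refine ⟨ℓ + 1, Fin.cons _ f, rfl, by rw [← Fin.succ_last, Fin.cons_succ, hfl], ?_⟩
    intro k
    cases k using Fin.cases with
    | zero => simpa [hf0] using hac
    | succ j => simpa [← Fin.succ_castSucc] using hf j

section SwapVec

variable {α : Type*} [DecidableEq α]

def swapVec (a b c w : α) : α → ℤ :=
  Pi.single a (-1) + Pi.single b 1 + Pi.single c (-1) + Pi.single w 1

lemma swapVec_diag_left (p q : α) : swapVec p p q q = 0 := by
  ext u
  simp only [swapVec, Pi.add_apply, Pi.single_apply, Pi.zero_apply]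
  split_ifs <;> simp

lemma swapVec_diag_right (p q : α) : swapVec p q q p = 0 := by
  ext u
  simp only [swapVec, Pi.add_apply, Pi.single_apply, Pi.zero_apply]
  split_ifs <;> simp

lemma add_swapVec_nonneg {x : α → ℤ} {a b c w : α} (hx : 0 ≤ x) (ha : 1 ≤ x a) (hc : 1 ≤ x c)
    (hac : a ≠ c) : 0 ≤ x + swapVec a b c w := by
  intro u
  have hxu : 0 ≤ x u := hx u
  simp only [Pi.add_apply, swapVec, Pi.single_apply, Pi.zero_apply]
  split_ifs <;> subst_vars <;> first | omega | exact absurd rfl hac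

end SwapVec

variable {V : Type}

section Labeling

variable {S T : Finset V}

def restrictLabel (h : T ⊆ S) (a : {x // x ∈ S} → Bool) : {x // x ∈ T} → Bool :=
  fun x => a ⟨x.1, h x.2⟩

variable [DecidableEq V] {X₁ X₂ : Finset V}

lemma eq_of_restrictLabel_eq {a b : {x // x ∈ X₁ ∪ X₂} → Bool}
    (h₁ : restrictLabel subset_union_left a = restrictLabel subset_union_left b)
    (h₂ : restrictLabel subset_union_right a = restrictLabel subset_union_right b) : a = b := by
  funext ⟨x, hx⟩
  rcases Finset.mem_union.1 hx with hx | hx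
  · exact congrFun h₁ ⟨x, hx⟩
  · exact congrFun h₂ ⟨x, hx⟩

lemma exists_glued_labeling {a b c : {x // x ∈ X₁ ∪ X₂} → Bool}
    (hab : restrictLabel subset_union_left a = restrictLabel subset_union_left b)
    (hbc : restrictLabel subset_union_right b = restrictLabel subset_union_right c) :
    ∃ w, restrictLabel subset_union_left c = restrictLabel subset_union_left w ∧
      restrictLabel subset_union_right w = restrictLabel subset_union_right a := by
  refine ⟨fun x => if x.1 ∈ X₁ then c x else a x, ?_, ?_⟩ <;> funext ⟨x, hx⟩
  · simp [restrictLabel, hx]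
  · simp only [restrictLabel]
    split_ifs with hx₁
    · exact (congrFun hbc ⟨x, hx⟩).symm.trans (congrFun hab ⟨x, hx₁⟩).symm
    · rfl

end Labeling

section Lattice

variable [Fintype V] [DecidableEq V] {S T : Finset V}

lemma projZ_apply (h : T ⊆ S) (z : ZL S) (b : {x // x ∈ T} → Bool) :
    projZ h z b = ∑ a, if restrictLabel h a = b then z a else 0 := by
  simp [projZ, funext_iff, restrictLabel]

lemma projZ_add (h : T ⊆ S) (z z' : ZL S) : projZ h (z + z') = projZ h z + projZ h z' := by
  funext b
  simp only [projZ_apply, Pi.add_apply, ← Finset.sum_add_distrib, ite_add_ite, add_zero]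

lemma projZ_neg (h : T ⊆ S) (z : ZL S) : projZ h (-z) = -projZ h z := by
  funext b
  simp only [projZ_apply, Pi.neg_apply, ← Finset.sum_neg_distrib, apply_ite Neg.neg, neg_zero]

lemma projZ_sub (h : T ⊆ S) (z z' : ZL S) : projZ h (z - z') = projZ h z - projZ h z' := by
  rw [sub_eq_add_neg, projZ_add, projZ_neg, ← sub_eq_add_neg]

lemma projZ_single (h : T ⊆ S) (a : {x // x ∈ S} → Bool) (t : ℤ) :
    projZ h (Pi.single a t) = Pi.single (restrictLabel h a) t := by
  funext b
  rw [projZ_apply, Finset.sum_eq_single a (fun u _ hu => by simp [hu]) (by simp)]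
  simp [Pi.single_apply, eq_comm]

lemma projZ_swapVec (h : T ⊆ S) (a b c w : {x // x ∈ S} → Bool) :
    projZ h (swapVec a b c w) =
      swapVec (restrictLabel h a) (restrictLabel h b) (restrictLabel h c) (restrictLabel h w) := by
  simp only [swapVec, projZ_add, projZ_single]

lemma exists_neg_of_projZ_eq_zero (h : T ⊆ S) {d : ZL S} (hd : projZ h d = 0)
    {a : {x // x ∈ S} → Bool} (ha : 0 < d a) :
    ∃ b, restrictLabel h a = restrictLabel h b ∧ d b < 0 := by
  by_contra! hfib
  have hsum : ∑ b with restrictLabel h b = restrictLabel h a, d b = 0 := by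
    rw [Finset.sum_filter, ← projZ_apply, hd, Pi.zero_apply]
  have := Finset.single_le_sum (s := {b | restrictLabel h b = restrictLabel h a}) (f := d)
    (fun b hb => hfib b (Finset.mem_filter.1 hb).2.symm)
    (Finset.mem_filter.2 ⟨Finset.mem_univ a, rfl⟩)
  omega

lemma exists_pos_of_projZ_eq_zero (h : T ⊆ S) {d : ZL S} (hd : projZ h d = 0)
    {a : {x // x ∈ S} → Bool} (ha : d a < 0) :
    ∃ b, restrictLabel h a = restrictLabel h b ∧ 0 < d b := by
  obtain ⟨b, hab, hb⟩ := exists_neg_of_projZ_eq_zero h (d := -d) (by rw [projZ_neg, hd, neg_zero])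
    (neg_pos.2 ha)
  exact ⟨b, hab, neg_neg_iff_pos.1 hb⟩

lemma l1Z_nonneg (z : ZL S) : 0 ≤ l1Z z :=
  Finset.sum_nonneg fun _ _ => abs_nonneg _

lemma l1Z_add_single (z : ZL S) (u : {x // x ∈ S} → Bool) (t : ℤ) :
    l1Z (z + Pi.single u t) = l1Z z - |z u| + |z u + t| := by
  unfold l1Z
  rw [← Finset.add_sum_erase _ _ (Finset.mem_univ u),
    ← Finset.add_sum_erase _ _ (Finset.mem_univ u)]
  have : ∀ v ∈ Finset.univ.erase u, |(z + Pi.single u t : ZL S) v| = |z v| := fun v hv => by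
    simp [Finset.ne_of_mem_erase hv]
  rw [Finset.sum_congr rfl this]
  simp only [Pi.add_apply, Pi.single_eq_same]
  abel

lemma l1Z_add_swapVec (z : ZL S) {a b c w : {x // x ∈ S} → Bool} (hab : a ≠ b) (hac : a ≠ c)
    (haw : a ≠ w) (hbc : b ≠ c) (hbw : b ≠ w) (hcw : c ≠ w) :
    l1Z (z + swapVec a b c w) = l1Z z + (|z a - 1| - |z a|) + (|z b + 1| - |z b|) +
      (|z c - 1| - |z c|) + (|z w + 1| - |z w|) := by
  simp only [swapVec, ← add_assoc, l1Z_add_single, Pi.add_apply, Pi.single_apply,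
    hab.symm, hac.symm, haw.symm, hbc.symm, hbw.symm, hcw.symm, if_false, add_zero,
    ← sub_eq_add_neg]
  ring

lemma l1Z_swapVec {a b c w : {x // x ∈ S} → Bool} (hab : a ≠ b) (hac : a ≠ c)
    (haw : a ≠ w) (hbc : b ≠ c) (hbw : b ≠ w) (hcw : c ≠ w) : l1Z (swapVec a b c w) = 4 := by
  simpa [l1Z] using l1Z_add_swapVec (0 : ZL S) hab hac haw hbc hbw hcw

end Lattice

section Union

variable [Fintype V] [DecidableEq V] {X₁ X₂ : Finset V}

lemma exists_swap_corners {d : ZL (X₁ ∪ X₂)} (hd₁ : projZ subset_union_left d = 0)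
    (hd₂ : projZ subset_union_right d = 0) (hd : d ≠ 0) :
    ∃ a b c w, 0 < d a ∧ d b < 0 ∧ 0 < d c ∧
      restrictLabel subset_union_left a = restrictLabel subset_union_left b ∧
      restrictLabel subset_union_right b = restrictLabel subset_union_right c ∧
      restrictLabel subset_union_left c = restrictLabel subset_union_left w ∧
      restrictLabel subset_union_right w = restrictLabel subset_union_right a := by
  obtain ⟨a, ha⟩ : ∃ a, 0 < d a := by
    obtain ⟨u, hu⟩ := Function.ne_iff.1 hd
    rcases hu.lt_or_gt with hneg | hpos
    · obtain ⟨a, -, ha⟩ := exists_pos_of_projZ_eq_zero _ hd₁ hneg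
      exact ⟨a, ha⟩
    · exact ⟨u, hpos⟩
  obtain ⟨b, hab, hb⟩ := exists_neg_of_projZ_eq_zero _ hd₁ ha
  obtain ⟨c, hbc, hc⟩ := exists_pos_of_projZ_eq_zero _ hd₂ hb
  obtain ⟨w, hcw, hwa⟩ := exists_glued_labeling hab hbc
  exact ⟨a, b, c, w, ha, hb, hc, hab, hbc, hcw, hwa⟩

variable (X₁ X₂) in
def IsSwapStep (z₁ z₂ : ZL (X₁ ∪ X₂)) : Prop :=
  l1Z (z₂ - z₁) = 4 ∧
    projZ subset_union_left z₁ = projZ subset_union_left z₂ ∧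
    projZ subset_union_right z₁ = projZ subset_union_right z₂

lemma exists_isSwapStep_closer {z z' : ZL (X₁ ∪ X₂)}
    (h₁ : projZ subset_union_left z = projZ subset_union_left z')
    (h₂ : projZ subset_union_right z = projZ subset_union_right z') (hne : z ≠ z') :
    ∃ z₁, IsSwapStep X₁ X₂ z z₁ ∧ l1Z (z₁ - z') < l1Z (z - z') ∧ (0 ≤ z' → 0 ≤ z → 0 ≤ z₁) := by
  obtain ⟨a, b, c, w, ha, hb, hc, hab, hbc, hcw, hwa⟩ :=
    exists_swap_corners (d := z - z') (by rw [projZ_sub, h₁, sub_self])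
      (by rw [projZ_sub, h₂, sub_self]) (sub_ne_zero.2 hne)
  have hab' : a ≠ b := fun h => by subst h; omega
  have hbc' : b ≠ c := fun h => by subst h; omega
  have hac' : a ≠ c := by rintro rfl; exact hab' (eq_of_restrictLabel_eq hab hbc.symm)
  have haw' : a ≠ w := by
    rintro rfl; exact hbc' (eq_of_restrictLabel_eq (hab.symm.trans hcw.symm) hbc)
  have hbw' : b ≠ w := by rintro rfl; exact hab' (eq_of_restrictLabel_eq hab hwa.symm)
  have hcw' : c ≠ w := by
    rintro rfl; exact hab' (eq_of_restrictLabel_eq hab (hwa.symm.trans hbc.symm))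
  refine ⟨z + swapVec a b c w, ⟨?_, ?_, ?_⟩, ?_, fun hz' hz => ?_⟩
  · rw [add_sub_cancel_left, l1Z_swapVec hab' hac' haw' hbc' hbw' hcw']
  · rw [projZ_add, projZ_swapVec, hab, hcw, swapVec_diag_left, add_zero]
  · rw [projZ_add, projZ_swapVec, hbc, hwa, swapVec_diag_right, add_zero]
  · rw [add_sub_right_comm, l1Z_add_swapVec _ hab' hac' haw' hbc' hbw' hcw']
    simp only [abs_eq_max_neg]
    omega
  · have hz'a : 0 ≤ z' a := hz' a
    have hz'c : 0 ≤ z' c := hz' c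
    simp only [Pi.sub_apply] at ha hc
    exact add_swapVec_nonneg hz (by omega) (by omega) hac'

lemma reflTransGen_isSwapStep {z z' : ZL (X₁ ∪ X₂)}
    (h₁ : projZ subset_union_left z = projZ subset_union_left z')
    (h₂ : projZ subset_union_right z = projZ subset_union_right z') :
    Relation.ReflTransGen (fun x y => IsSwapStep X₁ X₂ x y ∧ (0 ≤ z' → 0 ≤ x → 0 ≤ y)) z z' := by
  by_cases hne : z = z'
  · rw [hne]
  obtain ⟨z₁, hstep, hcloser, hnonneg⟩ := exists_isSwapStep_closer h₁ h₂ hne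
  exact .head ⟨hstep, hnonneg⟩
    (reflTransGen_isSwapStep (hstep.2.1.symm.trans h₁) (hstep.2.2.symm.trans h₂))
termination_by (l1Z (z - z')).toNat
decreasing_by have := l1Z_nonneg (z₁ - z'); omega

end Union

theorem glue_swaps {V : Type} [Fintype V] [DecidableEq V] (X₁ X₂ : Finset V)
    (z z' : ZL (X₁ ∪ X₂))
    (h1 : projZ subset_union_left z = projZ subset_union_left z')
    (h2 : projZ subset_union_right z = projZ subset_union_right z') :
    ∃ (ℓ : ℕ) (f : Fin (ℓ + 1) → ZL (X₁ ∪ X₂)),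
      f 0 = z ∧ f (Fin.last ℓ) = z' ∧
      (∀ k : Fin ℓ,
        l1Z (f k.succ - f k.castSucc) = 4 ∧
        projZ subset_union_left (f k.castSucc) = projZ subset_union_left (f k.succ) ∧
        projZ subset_union_right (f k.castSucc) = projZ subset_union_right (f k.succ)) ∧
      ((∀ a, 0 ≤ z a) → (∀ a, 0 ≤ z' a) → ∀ k a, 0 ≤ f k a) := by
  obtain ⟨ℓ, f, hf0, hfl, hf⟩ := (reflTransGen_isSwapStep h1 h2).exists_fin_path
  refine ⟨ℓ, f, hf0, hfl, fun k => (hf k).1, fun hz hz' k => ?_⟩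
  induction k using Fin.induction with
  | zero => rw [hf0]; exact hz
  | succ k ih => exact (hf k).2 hz' ih
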